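/- Let K be a compact, perfectly normal topological space. A real-valued function f ∈ C(K) with ‖f‖ = 1 is a (ρ₊)-right symmetric point of C(K) if and only if f(k) ≠ 0 for every k ∈ K. -/

import Mathlib

open Filter Topology Set Metric NormedSpace

noncomputable section

/-- Birkhoff–James orthogonality: `x ⊥_B y` iff `‖x + t • y‖ ≥ ‖x‖` for all real `t`. -/
def BJOrth {E : Type*} [NormedAddCommGroup E] [NormedSpace ℝ E] (x y : E) : Prop :=
  ∀ t : ℝ, ‖x‖ ≤ ‖x + t • y‖

/-- The norm derivative `ρ'₊(x,y) = ‖x‖ · lim_{t→0⁺} (‖x+ty‖-‖x‖)/t`. -/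
def rhoPlus {E : Type*} [NormedAddCommGroup E] [NormedSpace ℝ E] (x y : E) : ℝ :=
  ‖x‖ * limUnder (𝓝[>] (0 : ℝ)) (fun t => (‖x + t • y‖ - ‖x‖) / t)

/-- The norm derivative `ρ'₋(x,y) = ‖x‖ · lim_{t→0⁻} (‖x+ty‖-‖x‖)/t`. -/
def rhoMinus {E : Type*} [NormedAddCommGroup E] [NormedSpace ℝ E] (x y : E) : ℝ :=
  ‖x‖ * limUnder (𝓝[<] (0 : ℝ)) (fun t => (‖x + t • y‖ - ‖x‖) / t)

/-- The norm derivative `ρ'(x,y) = (ρ'₊(x,y) + ρ'₋(x,y))/2`. -/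
def rhoDer {E : Type*} [NormedAddCommGroup E] [NormedSpace ℝ E] (x y : E) : ℝ :=
  (rhoPlus x y + rhoMinus x y) / 2

/-- `x` is an exposed point of the closed unit ball of `E`: there is a norm-one functional `f`
with `f x = 1` and `f u < 1` for every `u` in the ball with `u ≠ x`. -/
def ExposedPt {E : Type*} [NormedAddCommGroup E] [NormedSpace ℝ E] (x : E) : Prop :=
  ‖x‖ ≤ 1 ∧ ∃ f : E →L[ℝ] ℝ, ‖f‖ = 1 ∧ f x = 1 ∧ ∀ u : E, ‖u‖ ≤ 1 → u ≠ x → f u < 1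

/-!
In `C(K)` the right norm derivative is read off the norming set `{k | |x k| = ‖x‖}`: for `x ≠ 0`,
`ρ'₊(x, y) = max {x k * y k | |x k| = ‖x‖}`. The bound `≥` holds pointwise; for `≤`, outside a
neighbourhood of the norming set `|x|` is uniformly below `‖x‖`, so for small `t > 0` the norm of
`x + t • y` is attained near it. Hence if `f` has no zeros, `ρ'₊(g, f) ≠ 0` for every `g ≠ 0`.
If `f k₀ = 0`, perfect normality yields a positive `g ≤ 1` equal to `1` exactly at `k₀`; then
`ρ'₊(g, f) = f k₀ = 0`, whereas `ρ'₊(f, g) = f k * g k ≠ 0`.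
-/

section NormDerivative

variable {E : Type*} [NormedAddCommGroup E] [NormedSpace ℝ E]

theorem convexOn_norm_add_smul (x y : E) : ConvexOn ℝ univ fun t : ℝ => ‖x + t • y‖ := by
  have := convexOn_univ_norm (E := E) |>.comp_affineMap (AffineMap.lineMap x (x + y))
  simpa [Function.comp_def, AffineMap.lineMap_apply_module', add_comm] using this

theorem tendsto_norm_add_smul_slope (x y : E) :
    Tendsto (fun t : ℝ => (‖x + t • y‖ - ‖x‖) / t) (𝓝[>] 0)
      (𝓝 (derivWithin (fun t : ℝ => ‖x + t • y‖) (Ioi 0) 0)) := by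
  have := (hasDerivWithinAt_iff_tendsto_slope' (self_notMem_Ioi (a := (0 : ℝ)))).mp
    ((convexOn_norm_add_smul x y).hasDerivWithinAt_rightDeriv_of_mem_interior (by simp))
  simpa [slope_fun_def_field] using this

theorem rhoPlus_eq_norm_mul_derivWithin (x y : E) :
    rhoPlus x y = ‖x‖ * derivWithin (fun t : ℝ => ‖x + t • y‖) (Ioi 0) 0 := by
  rw [rhoPlus, (tendsto_norm_add_smul_slope x y).limUnder_eq]

end NormDerivative

namespace ContinuousMap

variable {K : Type*} [TopologicalSpace K] [CompactSpace K]

theorem exists_abs_apply_eq_norm [Nonempty K] (x : C(K, ℝ)) : ∃ k, |x k| = ‖x‖ := by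
  obtain ⟨k, -, hk⟩ := isCompact_univ.exists_isMaxOn univ_nonempty
    (continuous_abs.comp x.continuous).continuousOn
  refine ⟨k, le_antisymm (by simpa using x.norm_coe_le_norm k) ?_⟩
  exact (x.norm_le (abs_nonneg _)).mpr fun j => by simpa using hk (mem_univ j)

theorem abs_apply_le_norm (x : C(K, ℝ)) (k : K) : |x k| ≤ ‖x‖ := by
  simpa using x.norm_coe_le_norm k

theorem sq_apply_le_sq_norm (x : C(K, ℝ)) (k : K) : x k ^ 2 ≤ ‖x‖ ^ 2 := by
  simpa only [sq_abs] using pow_le_pow_left₀ (abs_nonneg _) (abs_apply_le_norm x k) 2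

theorem exists_lt_norm_of_isClosed {x : C(K, ℝ)} (hx : x ≠ 0) {C : Set K} (hC : IsClosed C)
    (h : ∀ k ∈ C, |x k| < ‖x‖) : ∃ r, 0 ≤ r ∧ r < ‖x‖ ∧ ∀ k ∈ C, |x k| ≤ r := by
  rcases C.eq_empty_or_nonempty with rfl | hne
  · exact ⟨0, le_rfl, norm_pos_iff.mpr hx, by simp⟩
  obtain ⟨k, hk, hmax⟩ := hC.isCompact.exists_isMaxOn hne
    (continuous_abs.comp x.continuous).continuousOn
  exact ⟨|x k|, abs_nonneg _, h k hk, fun j hj => hmax hj⟩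

theorem mul_apply_le_rhoPlus {x : C(K, ℝ)} {k : K} (hk : |x k| = ‖x‖) (y : C(K, ℝ)) :
    x k * y k ≤ rhoPlus x y := by
  rw [rhoPlus_eq_norm_mul_derivWithin]
  refine ge_of_tendsto ((tendsto_norm_add_smul_slope x y).const_mul ‖x‖)
    (eventually_nhdsWithin_of_forall fun t (ht : 0 < t) => ?_)
  have hxt : |x k + t * y k| ≤ ‖x + t • y‖ := by simpa using (x + t • y).norm_coe_le_norm k
  have hprod : x k * (x k + t * y k) ≤ ‖x‖ * ‖x + t • y‖ := by
    calc x k * (x k + t * y k) ≤ |x k| * |x k + t * y k| := by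
          rw [← abs_mul]; exact le_abs_self _
      _ ≤ ‖x‖ * ‖x + t • y‖ := by rw [hk]; gcongr
  have hsq : ‖x‖ * ‖x‖ = x k * x k := by rw [← hk, abs_mul_abs_self]
  rw [mul_div_assoc', le_div_iff₀ ht]
  nlinarith

theorem apply_ne_zero_of_abs_eq_norm {x : C(K, ℝ)} (hx : x ≠ 0) {k : K} (hk : |x k| = ‖x‖) :
    x k ≠ 0 := fun h0 => hx (norm_eq_zero.mp (by rw [← hk, h0, abs_zero]))

/- Off the open set where `x * y < c`, the function `|x|` stays below some `r < ‖x‖`, so for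
small `t` the sup norm of `x + t • y` is attained where `x * y < c`. -/
theorem eventually_sq_norm_add_smul_le {x : C(K, ℝ)} (hx : x ≠ 0) (y : C(K, ℝ)) {c : ℝ}
    (h : ∀ k, |x k| = ‖x‖ → x k * y k < c) :
    ∀ᶠ t in 𝓝[>] (0 : ℝ), ‖x + t • y‖ ^ 2 ≤ ‖x‖ ^ 2 + 2 * t * c + t ^ 2 * ‖y‖ ^ 2 := by
  have := (DFunLike.ne_iff.mp hx).nonempty
  obtain ⟨r, hr0, hrx, hr⟩ := exists_lt_norm_of_isClosed hx
    (isOpen_lt (x.continuous.mul y.continuous) continuous_const).isClosed_compl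
    fun k hk => (abs_apply_le_norm x k).lt_of_ne fun hk' => hk (h k hk')
  have hsmall : ∀ᶠ t in 𝓝[>] (0 : ℝ), r ^ 2 + 2 * t * (r * ‖y‖ - c) < ‖x‖ ^ 2 := by
    refine nhdsWithin_le_nhds (Tendsto.eventually_lt_const (v := r ^ 2) ?_ ?_)
    · nlinarith
    · exact Continuous.tendsto' (by fun_prop) 0 _ (by simp)
  filter_upwards [hsmall, self_mem_nhdsWithin] with t hrt (ht : 0 < t)
  obtain ⟨k, hk⟩ := exists_abs_apply_eq_norm (x + t • y)
  have hyk := sq_apply_le_sq_norm y k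
  rw [← hk, sq_abs, show (x + t • y) k = x k + t * y k from rfl]
  by_cases hkc : x k * y k < c
  · nlinarith [sq_apply_le_sq_norm x k, mul_lt_mul_of_pos_left hkc ht,
      mul_le_mul_of_nonneg_left hyk (sq_nonneg t)]
  · have : |x k + t * y k| ≤ r + t * ‖y‖ :=
      calc |x k + t * y k| ≤ |x k| + t * |y k| := by
            simpa [abs_mul, abs_of_pos ht] using abs_add_le (x k) (t * y k)
        _ ≤ r + t * ‖y‖ := by gcongr; exacts [hr k hkc, abs_apply_le_norm y k]
    nlinarith [sq_abs (x k + t * y k), pow_le_pow_left₀ (abs_nonneg _) this 2]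

theorem rhoPlus_le_of_forall_lt {x : C(K, ℝ)} (hx : x ≠ 0) (y : C(K, ℝ)) {c : ℝ}
    (h : ∀ k, |x k| = ‖x‖ → x k * y k < c) : rhoPlus x y ≤ c := by
  set L := derivWithin (fun t : ℝ => ‖x + t • y‖) (Ioi 0) 0
  -- multiply the difference quotient by `‖x + t • y‖ + ‖x‖ → 2 ‖x‖` to compare squares
  have hbound : ∀ᶠ t in 𝓝[>] (0 : ℝ),
      (‖x + t • y‖ - ‖x‖) / t * (‖x + t • y‖ + ‖x‖) ≤ 2 * c + t * ‖y‖ ^ 2 := by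
    filter_upwards [eventually_sq_norm_add_smul_le hx y h, self_mem_nhdsWithin]
      with t hsq (ht : 0 < t)
    rw [div_mul_eq_mul_div, div_le_iff₀ ht]
    nlinarith
  have hlim : Tendsto (fun t : ℝ => (‖x + t • y‖ - ‖x‖) / t * (‖x + t • y‖ + ‖x‖)) (𝓝[>] 0)
      (𝓝 (L * (‖x‖ + ‖x‖))) := by
    refine (tendsto_norm_add_smul_slope x y).mul (Tendsto.add ?_ tendsto_const_nhds)
    exact (Continuous.tendsto' (by fun_prop) 0 _ (by simp)).mono_left nhdsWithin_le_nhds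
  have hlim' : Tendsto (fun t : ℝ => 2 * c + t * ‖y‖ ^ 2) (𝓝[>] 0) (𝓝 (2 * c)) :=
    (Continuous.tendsto' (by fun_prop) 0 _ (by simp)).mono_left nhdsWithin_le_nhds
  have := le_of_tendsto_of_tendsto hlim hlim' hbound
  rw [rhoPlus_eq_norm_mul_derivWithin]
  linarith

theorem exists_rhoPlus_eq_mul_apply {x : C(K, ℝ)} (hx : x ≠ 0) (y : C(K, ℝ)) :
    ∃ k, |x k| = ‖x‖ ∧ rhoPlus x y = x k * y k := by
  have := (DFunLike.ne_iff.mp hx).nonempty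
  obtain ⟨k₁, hk₁⟩ := exists_abs_apply_eq_norm x
  have hM : IsClosed {k | |x k| = ‖x‖} :=
    isClosed_eq (continuous_abs.comp x.continuous) continuous_const
  obtain ⟨k, hk, hmax⟩ := hM.isCompact.exists_isMaxOn ⟨k₁, hk₁⟩
    (x.continuous.mul y.continuous).continuousOn
  refine ⟨k, hk, le_antisymm (le_of_forall_pos_le_add fun ε hε => ?_) (mul_apply_le_rhoPlus hk y)⟩
  exact rhoPlus_le_of_forall_lt hx y fun j hj => (hmax hj).trans_lt (lt_add_of_pos_right _ hε)

end ContinuousMap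

theorem exists_continuousMap_peak {X : Type*} [TopologicalSpace X] [PerfectlyNormalSpace X]
    [T1Space X] (x₀ : X) :
    ∃ g : C(X, ℝ), g x₀ = 1 ∧ (∀ x, 0 < g x) ∧ ∀ x ≠ x₀, g x < 1 := by
  obtain ⟨h, hzero, hrange⟩ :=
    perfectlyNormalSpace_iff_forall_isClosed_preimage_zero.mp ‹_› _ (isClosed_singleton (x := x₀))
  refine ⟨1 - (2⁻¹ : ℝ) • h, ?_, fun x => ?_, fun x hx => ?_⟩
  · have : h x₀ = 0 := by simpa using hzero.subset rfl
    simp [this]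
  · change 0 < 1 - 2⁻¹ * h x
    linarith [(hrange x).2]
  · have : h x ≠ 0 := fun h0 => hx (by simpa using hzero.superset h0)
    change 1 - 2⁻¹ * h x < 1
    linarith [lt_of_le_of_ne (hrange x).1 this.symm]

open ContinuousMap in
theorem stmt14 {K : Type*} [TopologicalSpace K] [CompactSpace K] [T2Space K]
    [PerfectlyNormalSpace K]
    (f : C(K, ℝ)) (hf : ‖f‖ = 1) :
    (∀ g : C(K, ℝ), rhoPlus g f = 0 → rhoPlus f g = 0) ↔ (∀ k : K, f k ≠ 0) := by
  have hf0 : f ≠ 0 := by rintro rfl; simp at hf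
  constructor
  · intro h k₀ hfk₀
    obtain ⟨g, hgk₀, hgpos, hglt⟩ := exists_continuousMap_peak k₀
    have hg0 : g ≠ 0 := fun h0 => by simp [h0] at hgk₀
    obtain ⟨k, hk, hgf⟩ := exists_rhoPlus_eq_mul_apply hg0 f
    have hkk₀ : k = k₀ := by
      by_contra hne
      have := abs_apply_le_norm g k₀
      rw [← hk, hgk₀, abs_one, abs_of_pos (hgpos k)] at this
      exact (hglt k hne).not_ge this
    obtain ⟨j, hj, hfg⟩ := exists_rhoPlus_eq_mul_apply hf0 g
    have hfg0 : rhoPlus f g = 0 := h g (by rw [hgf, hkk₀, hfk₀, mul_zero])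
    exact mul_ne_zero (apply_ne_zero_of_abs_eq_norm hf0 hj) (hgpos j).ne' (hfg ▸ hfg0)
  · intro hf' g hgf
    by_cases hg0 : g = 0
    · obtain ⟨k, -, hfg⟩ := exists_rhoPlus_eq_mul_apply hf0 g
      rw [hfg, hg0, ContinuousMap.zero_apply, mul_zero]
    · obtain ⟨k, hk, hgf'⟩ := exists_rhoPlus_eq_mul_apply hg0 f
      exact absurd (hgf' ▸ hgf) (mul_ne_zero (apply_ne_zero_of_abs_eq_norm hg0 hk) (hf' k))
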